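/- Let S be a numerical monoid, let a ∈ S with a ≠ 0, and let A = {0, a}. Then ω(P_fin,0(S), A) = ∞; concretely, for every n ∈ ℕ there exist atoms U₁, …, U_{n+2} of P_fin,0(S) such that A divides U₁ + ⋯ + U_{n+2} in P_fin,0(S), but for every proper subset Ω ⊊ {1, …, n+2}, A does not divide the sum of the Uᵢ over i ∈ Ω. -/
import Mathlib


open Pointwise

/-- The restricted power monoid `P_fin,0(S)`: finite subsets of `S` containing `0`. -/
def Pfin0 (S : AddSubmonoid ℕ) : Set (Finset ℕ) :=
  {A | 0 ∈ A ∧ (A : Set ℕ) ⊆ (S : Set ℕ)}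

/-- Divisibility in `P_fin,0(S)`: `B` divides `A` if `A = B + C` for some
`C ∈ P_fin,0(S)`. -/
def Dvd0S (S : AddSubmonoid ℕ) (B A : Finset ℕ) : Prop := ∃ C ∈ Pfin0 S, A = B + C

/-- Atoms of `P_fin,0(S)`. -/
def IsAtom0 (S : AddSubmonoid ℕ) (U : Finset ℕ) : Prop :=
  U ∈ Pfin0 S ∧ U ≠ {0} ∧
    ∀ B ∈ Pfin0 S, ∀ C ∈ Pfin0 S, U = B + C → B = {0} ∨ C = {0}

/- ### Auxiliary material -/

lemma mem_finsetSum_iff {ι : Type*} [DecidableEq ι] (Ω : Finset ι) (A : ι → Finset ℕ) (x : ℕ) :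
    x ∈ ∑ i ∈ Ω, A i ↔ ∃ c : ι → ℕ, (∀ i ∈ Ω, c i ∈ A i) ∧ ∑ i ∈ Ω, c i = x := by
  classical
  induction Ω using Finset.induction_on generalizing x with
  | empty =>
      simp only [Finset.sum_empty, Finset.mem_zero]
      constructor
      · rintro rfl; exact ⟨fun _ => 0, by simp, by simp⟩
      · rintro ⟨c, _, rfl⟩; rfl
  | @insert j Ω' hj ih =>
      rw [Finset.sum_insert hj, Finset.mem_add]
      constructor
      · rintro ⟨u, hu, v, hv, rfl⟩
        obtain ⟨c, hc, hcs⟩ := (ih v).1 hv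
        refine ⟨Function.update c j u, ?_, ?_⟩
        · intro i hi
          rcases Finset.mem_insert.1 hi with rfl | hi'
          · simpa using hu
          · rw [Function.update_of_ne (by rintro rfl; exact hj hi')]
            exact hc i hi'
        · rw [Finset.sum_insert hj, Function.update_self]
          congr 1
          rw [← hcs]
          exact Finset.sum_congr rfl fun i hi =>
            Function.update_of_ne (by rintro rfl; exact hj hi) _ _
      · rintro ⟨c, hc, rfl⟩
        rw [Finset.sum_insert hj]
        exact ⟨c j, hc j (Finset.mem_insert_self _ _), ∑ i ∈ Ω', c i,
          (ih _).2 ⟨c, fun i hi => hc i (Finset.mem_insert_of_mem hi), rfl⟩, rfl⟩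

lemma exists_pq {ι : Type*} [DecidableEq ι] (a : ℕ) (Ω : Finset ι) (c : ι → ℕ)
    (hc : ∀ i ∈ Ω, c i = 0 ∨ c i = a ∨ c i = 3 * a) :
    ∃ p q, p + q ≤ Ω.card ∧ ∑ i ∈ Ω, c i = (p + 3 * q) * a := by
  classical
  induction Ω using Finset.induction_on with
  | empty => exact ⟨0, 0, by simp⟩
  | @insert j Ω' hj ih =>
      obtain ⟨p, q, hpq, hs⟩ := ih fun i hi => hc i (Finset.mem_insert_of_mem hi)
      rw [Finset.sum_insert hj, Finset.card_insert_of_notMem hj]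
      rcases hc j (Finset.mem_insert_self _ _) with h | h | h
      · exact ⟨p, q, by omega, by rw [h, hs, zero_add]⟩
      · exact ⟨p + 1, q, by omega, by rw [h, hs]; ring⟩
      · exact ⟨p, q + 1, by omega, by rw [h, hs]; ring⟩

lemma sumdig (p q : ℕ) : ∀ t : ℕ,
    ∑ j ∈ Finset.range t, (if j < p then 1 else if j < p + q then 3 else 0)
      = min t p + 3 * (min t (p + q) - min t p) := by
  intro t
  induction t with
  | zero => simp
  | succ t ih =>
      rw [Finset.sum_range_succ, ih]
      by_cases h1 : t < p <;> by_cases h2 : t < p + q <;> simp [h1, h2] <;> omega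

lemma triple_atom (S : AddSubmonoid ℕ) (x y : ℕ) (hx : 0 < x) (hxy : x < y) (hy : y ≠ 2 * x)
    (hxS : x ∈ S) (hyS : y ∈ S) : IsAtom0 S ({0, x, y} : Finset ℕ) := by
  refine ⟨⟨by simp, ?_⟩, ?_, ?_⟩
  · intro z hz
    simp only [Finset.coe_insert, Finset.coe_singleton, Set.mem_insert_iff,
      Set.mem_singleton_iff] at hz
    rcases hz with rfl | rfl | rfl
    exacts [S.zero_mem, hxS, hyS]
  · intro h
    have hxmem : x ∈ ({0, x, y} : Finset ℕ) := by simp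
    rw [h, Finset.mem_singleton] at hxmem
    omega
  · intro B hB C hC hBC
    by_contra hcon
    push_neg at hcon
    obtain ⟨hB1, hC1⟩ := hcon
    have hbB : ∃ b ∈ B, b ≠ 0 := by
      by_contra h'
      push_neg at h'
      exact hB1 (Finset.eq_singleton_iff_unique_mem.mpr ⟨hB.1, h'⟩)
    have hcC : ∃ c ∈ C, c ≠ 0 := by
      by_contra h'
      push_neg at h'
      exact hC1 (Finset.eq_singleton_iff_unique_mem.mpr ⟨hC.1, h'⟩)
    obtain ⟨b, hb, hb0⟩ := hbB
    obtain ⟨c, hc, hc0⟩ := hcC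
    have hbU : b ∈ ({0, x, y} : Finset ℕ) := by
      rw [hBC]; simpa using Finset.add_mem_add hb hC.1
    have hcU : c ∈ ({0, x, y} : Finset ℕ) := by
      rw [hBC]; simpa using Finset.add_mem_add hB.1 hc
    have hbcU : b + c ∈ ({0, x, y} : Finset ℕ) := by
      rw [hBC]; exact Finset.add_mem_add hb hc
    simp only [Finset.mem_insert, Finset.mem_singleton] at hbU hcU hbcU
    omega

/-- The distinguished last index. -/
def Lst (n : ℕ) : Fin (n + 2) := ⟨n + 1, by omega⟩

/-- The family of atoms: `n+1` copies of `{0, a, 3a}` and one copy of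
`{0, (3n+2)a, (3n+3)a}`. -/
def Ufam (a n : ℕ) (i : Fin (n + 2)) : Finset ℕ :=
  if i = Lst n then {0, (3 * n + 2) * a, (3 * n + 3) * a} else {0, a, 3 * a}

lemma Ufam_sum_struct (a n : ℕ) (Ω : Finset (Fin (n + 2))) (x : ℕ)
    (hx : x ∈ ∑ i ∈ Ω, Ufam a n i) :
    ∃ p q e, p + q ≤ (Ω.erase (Lst n)).card ∧
      (e = 0 ∨ (Lst n ∈ Ω ∧ (e = 3 * n + 2 ∨ e = 3 * n + 3))) ∧
      x = (p + 3 * q + e) * a := by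
  obtain ⟨c, hc, hcs⟩ := (mem_finsetSum_iff Ω _ x).1 hx
  have hsmall : ∀ i ∈ Ω.erase (Lst n), c i = 0 ∨ c i = a ∨ c i = 3 * a := by
    intro i hi
    have hi' := Finset.mem_of_mem_erase hi
    have hne := Finset.ne_of_mem_erase hi
    have h := hc i hi'
    rw [Ufam, if_neg hne] at h
    simpa using h
  obtain ⟨p, q, hpq, hs⟩ := exists_pq a _ _ hsmall
  by_cases hL : Lst n ∈ Ω
  · have hsum := Finset.sum_erase_add Ω c hL
    have hcL := hc _ hL
    rw [Ufam, if_pos rfl] at hcL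
    simp only [Finset.mem_insert, Finset.mem_singleton] at hcL
    rcases hcL with h | h | h
    · exact ⟨p, q, 0, hpq, Or.inl rfl, by rw [← hcs, ← hsum, hs, h]; ring⟩
    · exact ⟨p, q, 3 * n + 2, hpq, Or.inr ⟨hL, Or.inl rfl⟩,
        by rw [← hcs, ← hsum, hs, h]; ring⟩
    · exact ⟨p, q, 3 * n + 3, hpq, Or.inr ⟨hL, Or.inr rfl⟩,
        by rw [← hcs, ← hsum, hs, h]; ring⟩
  · rw [Finset.erase_eq_of_notMem hL] at hs
    exact ⟨p, q, 0, hpq, Or.inl rfl, by rw [← hcs, hs]; ring⟩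

lemma Ufam_witness (a n : ℕ) (Ω : Finset (Fin (n + 2))) :
    3 * (Ω.erase (Lst n)).card * a ∈ ∑ i ∈ Ω, Ufam a n i := by
  apply (mem_finsetSum_iff _ _ _).2
  refine ⟨fun i => if i = Lst n then 0 else 3 * a, fun i _ => ?_, ?_⟩
  · by_cases h : i = Lst n <;> simp [Ufam, h]
  · by_cases hL : Lst n ∈ Ω
    · rw [← Finset.sum_erase_add Ω _ hL, if_pos rfl, add_zero,
        Finset.sum_congr rfl (fun i hi => if_neg (Finset.ne_of_mem_erase hi)),
        Finset.sum_const, smul_eq_mul]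
      ring
    · rw [Finset.erase_eq_of_notMem hL,
        Finset.sum_congr rfl (fun i hi => if_neg (fun h => hL (by rw [← h]; exact hi))),
        Finset.sum_const, smul_eq_mul]
      ring

lemma Ufam_key (a n : ℕ) (e p q : ℕ) (he : e = 0 ∨ e = 3 * n + 2 ∨ e = 3 * n + 3)
    (hpq : p + q ≤ n + 1) :
    (e + p + 3 * q) * a ∈ ∑ i, Ufam a n i := by
  apply (mem_finsetSum_iff _ _ _).2
  refine ⟨fun i => if (i : ℕ) < p then a else if (i : ℕ) < p + q then 3 * a
    else if (i : ℕ) = n + 1 then e * a else 0, fun i _ => ?_, ?_⟩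
  · dsimp only
    by_cases hiL : i = Lst n
    · have hiv : (i : ℕ) = n + 1 := by rw [hiL]; rfl
      rw [Ufam, if_pos hiL, hiv, if_neg (by omega), if_neg (by omega), if_pos rfl]
      rcases he with rfl | rfl | rfl <;> simp
    · have hiv : (i : ℕ) ≠ n + 1 := fun h => hiL (Fin.ext h)
      rw [Ufam, if_neg hiL]
      by_cases h1 : (i : ℕ) < p
      · simp [h1]
      · by_cases h2 : (i : ℕ) < p + q <;> simp [h1, h2, hiv]
  · rw [Fin.sum_univ_eq_sum_range
      (fun j => if j < p then a else if j < p + q then 3 * a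
        else if j = n + 1 then e * a else 0) (n + 2),
      Finset.sum_range_succ]
    have h3 : (if n + 1 < p then a else if n + 1 < p + q then 3 * a
        else if n + 1 = n + 1 then e * a else 0) = e * a := by
      rw [if_neg (by omega), if_neg (by omega), if_pos rfl]
    rw [h3]
    have h4 : ∑ j ∈ Finset.range (n + 1),
        (if j < p then a else if j < p + q then 3 * a else if j = n + 1 then e * a else 0)
        = ∑ j ∈ Finset.range (n + 1),
          (if j < p then 1 else if j < p + q then 3 else 0) * a := by
      refine Finset.sum_congr rfl fun j hj => ?_
      have hjn : j ≠ n + 1 := by have := Finset.mem_range.1 hj; omega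
      by_cases h1 : j < p
      · simp [h1]
      · by_cases h2 : j < p + q <;> simp [h1, h2, hjn]
    rw [h4, ← Finset.sum_mul, sumdig p q (n + 1),
      min_eq_right (by omega : p ≤ n + 1), min_eq_right hpq]
    have h5 : p + 3 * (p + q - p) = p + 3 * q := by omega
    rw [h5, ← add_mul]
    ring

/-- For a numerical monoid `S`, `0 ≠ a ∈ S`, and `A = {0, a}`, the ω-invariant
`ω(P_fin,0(S), A)` is infinite: for every `n` there are `n + 2` atoms whose sum
is divisible by `A` while no proper subsum is. -/
theorem omega_invariant_infinite (S : AddSubmonoid ℕ)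
    (hfin : ((S : Set ℕ)ᶜ).Finite) (a : ℕ) (haS : a ∈ S) (ha : a ≠ 0) :
    ∀ n : ℕ, ∃ U : Fin (n + 2) → Finset ℕ,
      (∀ i, IsAtom0 S (U i)) ∧
      Dvd0S S ({0, a} : Finset ℕ) (∑ i, U i) ∧
      (∀ Ω : Finset (Fin (n + 2)), Ω ⊂ Finset.univ →
        ¬ Dvd0S S ({0, a} : Finset ℕ) (∑ i ∈ Ω, U i)) := by
  intro n
  have hapos : 0 < a := Nat.pos_of_ne_zero ha
  have hma : ∀ m : ℕ, m * a ∈ S := by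
    intro m
    have := S.nsmul_mem haS m
    rwa [nsmul_eq_mul] at this
  refine ⟨Ufam a n, ?_, ?_, ?_⟩
  · -- atoms
    intro i
    by_cases hi : i = Lst n
    · rw [Ufam, if_pos hi]
      refine triple_atom S _ _ (Nat.mul_pos (by omega) hapos) ?_ ?_ (hma _) (hma _)
      · exact Nat.mul_lt_mul_of_lt_of_le (by omega) le_rfl hapos
      · intro h
        rw [← mul_assoc] at h
        have := Nat.eq_of_mul_eq_mul_right hapos h
        omega
    · rw [Ufam, if_neg hi]
      have h3 : 3 * a = 3 * a := rfl
      refine triple_atom S a (3 * a) hapos (by omega) (by omega) haS ?_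
      simpa using hma 3
  · -- divisibility of the total sum
    refine ⟨(Finset.range (6 * n + 6)).image (· * a), ⟨?_, ?_⟩, ?_⟩
    · exact Finset.mem_image.2 ⟨0, Finset.mem_range.2 (by omega), by simp⟩
    · intro z hz
      simp only [Finset.coe_image, Set.mem_image, Finset.mem_coe] at hz
      obtain ⟨m, _, rfl⟩ := hz
      exact hma m
    · -- ∑ = {0,a} + a·[0, 6n+6]
      ext x
      constructor
      · intro hx
        obtain ⟨p, q, e, hpq, he, rfl⟩ := Ufam_sum_struct a n Finset.univ x hx
        have hcard : (Finset.univ.erase (Lst n)).card = n + 1 := by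
          rw [Finset.card_erase_of_mem (Finset.mem_univ _), Finset.card_univ,
            Fintype.card_fin]
          omega
        rw [hcard] at hpq
        have heb : e ≤ 3 * n + 3 := by rcases he with rfl | ⟨_, h | h⟩ <;> omega
        rw [Finset.mem_add]
        rcases Nat.eq_zero_or_pos (p + 3 * q + e) with hT0 | hT0
        · exact ⟨0, by simp, 0 * a, Finset.mem_image.2 ⟨0, Finset.mem_range.2 (by omega), rfl⟩,
            by simp [hT0]⟩
        · obtain ⟨T', hT'⟩ : ∃ T', p + 3 * q + e = T' + 1 := ⟨p + 3 * q + e - 1, by omega⟩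
          refine ⟨a, by simp, T' * a,
            Finset.mem_image.2 ⟨T', Finset.mem_range.2 (by omega), rfl⟩, ?_⟩
          rw [hT']; ring
      · intro hx
        rw [Finset.mem_add] at hx
        obtain ⟨u, hu, v, hv, rfl⟩ := hx
        obtain ⟨m, hm, rfl⟩ := Finset.mem_image.1 hv
        rw [Finset.mem_range] at hm
        simp only [Finset.mem_insert, Finset.mem_singleton] at hu
        -- u + m*a = m'*a with m' ≤ 6n+6
        obtain ⟨m', hm', hmeq⟩ : ∃ m', m' ≤ 6 * n + 6 ∧ u + m * a = m' * a := by
          rcases hu with h | h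
          · exact ⟨m, by omega, by rw [h]; ring⟩
          · exact ⟨m + 1, by omega, by rw [h]; ring⟩
        rw [hmeq]
        obtain ⟨e, p, q, he, hpq, hdec⟩ : ∃ e p q,
            (e = 0 ∨ e = 3 * n + 2 ∨ e = 3 * n + 3) ∧ p + q ≤ n + 1 ∧
              m' = e + p + 3 * q := by
          by_cases h1 : m' ≤ 3 * n + 1
          · exact ⟨0, m' % 3, m' / 3, Or.inl rfl, by omega, by omega⟩
          by_cases h2 : m' ≤ 6 * n + 3
          · exact ⟨3 * n + 2, (m' - (3 * n + 2)) % 3, (m' - (3 * n + 2)) / 3,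
              Or.inr (Or.inl rfl), by omega, by omega⟩
          by_cases h3 : m' = 6 * n + 4
          · exact ⟨3 * n + 3, 1, n, Or.inr (Or.inr rfl), by omega, by omega⟩
          by_cases h4 : m' = 6 * n + 5
          · exact ⟨3 * n + 2, 0, n + 1, Or.inr (Or.inl rfl), by omega, by omega⟩
          · exact ⟨3 * n + 3, 0, n + 1, Or.inr (Or.inr rfl), by omega, by omega⟩
        rw [hdec]
        exact Ufam_key a n e p q he hpq
  · -- no proper subsum is divisible
    intro Ω hΩ hdvd
    obtain ⟨C', hC'mem, hX⟩ := hdvd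
    set s := (Ω.erase (Lst n)).card with hs
    have hcardΩ : Ω.card < n + 2 := by
      have := Finset.card_lt_card hΩ
      rwa [Finset.card_univ, Fintype.card_fin] at this
    have hsn : Lst n ∈ Ω → s ≤ n := by
      intro hL
      rw [hs, Finset.card_erase_of_mem hL]
      omega
    -- (ii): (3s+1)*a ∉ X
    have hii : (3 * s + 1) * a ∉ ∑ i ∈ Ω, Ufam a n i := by
      intro h
      obtain ⟨p, q, e, hpq, he, heq⟩ := Ufam_sum_struct a n Ω _ h
      have h' : 3 * s + 1 = p + 3 * q + e := Nat.eq_of_mul_eq_mul_right hapos heq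
      rw [← hs] at hpq
      rcases he with rfl | ⟨hL, h | h⟩
      · omega
      · have := hsn hL; omega
      · have := hsn hL; omega
    -- (iii): s ≥ 1 → (3s-1)*a ∉ X
    have hiii : 1 ≤ s → (3 * s - 1) * a ∉ ∑ i ∈ Ω, Ufam a n i := by
      intro hs1 h
      obtain ⟨p, q, e, hpq, he, heq⟩ := Ufam_sum_struct a n Ω _ h
      have h' : 3 * s - 1 = p + 3 * q + e := Nat.eq_of_mul_eq_mul_right hapos heq
      rw [← hs] at hpq
      rcases he with rfl | ⟨hL, h | h⟩
      · omega
      · have := hsn hL; omega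
      · have := hsn hL; omega
    -- witness
    have hw : 3 * s * a ∈ ∑ i ∈ Ω, Ufam a n i := by
      rw [hs]; exact Ufam_witness a n Ω
    rw [hX, Finset.mem_add] at hw
    obtain ⟨u, hu, v, hv, huv⟩ := hw
    simp only [Finset.mem_insert, Finset.mem_singleton] at hu
    have hvX : v ∈ ∑ i ∈ Ω, Ufam a n i := by
      rw [hX]
      have : (0 : ℕ) + v ∈ ({0, a} : Finset ℕ) + C' :=
        Finset.add_mem_add (by simp) hv
      simpa using this
    rcases hu with hu0 | hua
    · -- v = 3sa; then (3s+1)a ∈ X, contradiction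
      rw [hu0, zero_add] at huv
      apply hii
      rw [hX]
      have hmem : a + v ∈ ({0, a} : Finset ℕ) + C' :=
        Finset.add_mem_add (by simp) hv
      have hsum : a + v = (3 * s + 1) * a := by rw [huv]; ring
      rwa [hsum] at hmem
    · -- a + v = 3sa
      rw [hua] at huv
      rcases Nat.eq_zero_or_pos s with hs0 | hs1
      · rw [hs0] at huv
        simp at huv
        omega
      · apply hiii hs1
        have hv' : v = (3 * s - 1) * a := by
          have h6 : 3 * s * a = (3 * s - 1) * a + a := by
            have h7 : 3 * s = (3 * s - 1) + 1 := by omega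
            conv_lhs => rw [h7]
            ring
          rw [h6] at huv
          rw [add_comm ((3 * s - 1) * a) a] at huv
          exact (Nat.add_left_cancel huv)
        rwa [hv'] at hvX
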